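/- Let (X, M, μ) be a measure space, T a continuous linear functional on the Banach space C₀ (with the L^∞ norm), and for each atom E with 0 < μ(E) < ∞ set a_E = T(χ_E). Then the collection of pairwise disjoint atoms E of finite positive measure with a_E ≠ 0 is countable, and the sum of |a_E| over any countable family of pairwise disjoint such atoms is finite. -/

import Mathlib

open MeasureTheory ENNReal

/-- The set `C₀` of essentially bounded functions vanishing at infinity
relative to `μ`. -/
def C0set {X : Type*} [MeasurableSpace X] (μ : Measure X) : Set (Lp ℝ ∞ μ) :=
  {f : Lp ℝ ∞ μ | ∀ ε : ℝ, 0 < ε → ∃ E : Set X, MeasurableSet E ∧ μ E < ∞ ∧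
    eLpNorm ((Eᶜ).indicator (⇑f)) ∞ μ < ENNReal.ofReal ε}

/-- An atom of finite positive measure. -/
def IsFiniteAtom {X : Type*} [MeasurableSpace X] (μ : Measure X) (E : Set X) : Prop :=
  MeasurableSet E ∧ 0 < μ E ∧ μ E < ∞ ∧
    ∀ F ⊆ E, MeasurableSet F → μ F = 0 ∨ μ F = μ E

/-! For pairwise disjoint atoms `E i`, the function `∑ i ∈ u, sign (a (E i)) • χ_{E i}` lies in
`C₀`, has sup norm at most `1`, and is mapped by `T` to `∑ i ∈ u, |a (E i)|`. So all finite partial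
sums of `|a (E i)|` are bounded by `‖T‖`, the family is summable, and a summable real family has
countable support. -/

section

open Function

variable {X : Type*} [MeasurableSpace X] {μ : Measure X}

theorem indicatorConstLp_mem_C0set {s : Set X} (hs : MeasurableSet s) (hμs : μ s ≠ ∞) (c : ℝ) :
    indicatorConstLp ∞ hs hμs c ∈ C0set μ := by
  intro ε hε
  refine ⟨s, hs, hμs.lt_top, ?_⟩
  have : sᶜ.indicator ⇑(indicatorConstLp ∞ hs hμs c) =ᵐ[μ] 0 := by
    filter_upwards [indicatorConstLp_coeFn (p := ∞) (hs := hs) (hμs := hμs) (c := c)] with x hx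
    by_cases hxs : x ∈ s <;> simp [hxs, hx]
  rw [eLpNorm_congr_ae this, eLpNorm_zero]
  exact ENNReal.ofReal_pos.2 hε

theorem MeasureTheory.Lp.norm_top_le_of_ae_bound {F : Type*} [NormedAddCommGroup F]
    {f : Lp F ∞ μ} {C : ℝ} (hC : 0 ≤ C) (hfC : ∀ᵐ x ∂μ, ‖f x‖ ≤ C) : ‖f‖ ≤ C := by
  rw [Lp.norm_def, eLpNorm_exponent_top]
  exact ENNReal.toReal_le_of_le_ofReal hC (eLpNormEssSup_le_of_ae_bound hfC)

theorem norm_sum_smul_indicatorConstLp_top_le {ι : Type*} (u : Finset ι) {s : ι → Set X}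
    (hs : ∀ i, MeasurableSet (s i)) (hμs : ∀ i, μ (s i) ≠ ∞) (hd : Pairwise (Disjoint on s))
    {c : ι → ℝ} {C : ℝ} (hC : 0 ≤ C) (hc : ∀ i, |c i| ≤ C) :
    ‖∑ i ∈ u, c i • indicatorConstLp ∞ (hs i) (hμs i) (1 : ℝ)‖ ≤ C := by
  have hterm : ∀ i, ⇑(c i • indicatorConstLp ∞ (hs i) (hμs i) (1 : ℝ)) =ᵐ[μ]
      (s i).indicator fun _ => c i := fun i => by
    filter_upwards [Lp.coeFn_smul (c i) (indicatorConstLp ∞ (hs i) (hμs i) (1 : ℝ)),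
      indicatorConstLp_coeFn (p := ∞) (hs := hs i) (hμs := hμs i) (c := (1 : ℝ))] with x h1 h2
    by_cases hx : x ∈ s i <;> simp [h1, h2, hx]
  refine Lp.norm_top_le_of_ae_bound hC ?_
  filter_upwards
    [Lp.coeFn_fun_finsetSum u fun i => c i • indicatorConstLp ∞ (hs i) (hμs i) (1 : ℝ),
    (Filter.eventually_all_finset u).2 fun i _ => hterm i] with x hsum hx
  rw [hsum, Finset.sum_congr rfl hx, Real.norm_eq_abs]
  by_cases hxu : ∃ j ∈ u, x ∈ s j
  · obtain ⟨j, hj, hxj⟩ := hxu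
    rw [Finset.sum_eq_single_of_mem j hj fun i _ hij =>
      Set.indicator_of_notMem (Set.disjoint_right.1 (hd hij) hxj) _, Set.indicator_of_mem hxj]
    exact hc j
  · simp only [not_exists, not_and] at hxu
    rwa [Finset.sum_eq_zero fun i hi => Set.indicator_of_notMem (hxu i hi) _, abs_zero]

variable {S : Submodule ℝ (Lp ℝ ∞ μ)} (hS : (S : Set (Lp ℝ ∞ μ)) = C0set μ) (T : S →L[ℝ] ℝ)
  {a : Set X → ℝ}
  (ha : ∀ E : Set X, IsFiniteAtom μ E → ∀ g : S,
    (⇑(g : Lp ℝ ∞ μ) =ᵐ[μ] E.indicator (fun _ => (1 : ℝ))) → a E = T g)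
include hS ha

theorem sum_abs_le_opNorm {ι : Type*} (u : Finset ι) {E : ι → Set X}
    (hE : ∀ i, IsFiniteAtom μ (E i)) (hd : Pairwise (Disjoint on E)) :
    ∑ i ∈ u, |a (E i)| ≤ ‖T‖ := by
  let χ : ι → S := fun i => ⟨indicatorConstLp ∞ (hE i).1 (hE i).2.2.1.ne (1 : ℝ),
    SetLike.mem_coe.1 (hS ▸ indicatorConstLp_mem_C0set (hE i).1 (hE i).2.2.1.ne 1)⟩
  have haχ : ∀ i, a (E i) = T (χ i) := fun i => ha _ (hE i) (χ i) <|
    indicatorConstLp_coeFn (hs := (hE i).1) (hμs := (hE i).2.2.1.ne)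
  let f : S := ∑ i ∈ u, (SignType.sign (a (E i)) : ℝ) • χ i
  have hf : ‖f‖ ≤ 1 := by
    have hsign : ∀ i, |(SignType.sign (a (E i)) : ℝ)| ≤ 1 := fun i => by
      rcases SignType.sign (a (E i)) with _ | _ | _ <;> simp
    simpa [f, χ] using norm_sum_smul_indicatorConstLp_top_le u (fun i => (hE i).1)
      (fun i => (hE i).2.2.1.ne) hd zero_le_one hsign
  calc ∑ i ∈ u, |a (E i)| = T f := by simp [f, map_sum, haχ]
    _ ≤ ‖T‖ * ‖f‖ := (le_abs_self _).trans (T.le_opNorm f)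
    _ ≤ ‖T‖ := mul_le_of_le_one_right (norm_nonneg T) hf

theorem summable_abs_of_pairwise_disjoint {ι : Type*} {E : ι → Set X}
    (hE : ∀ i, IsFiniteAtom μ (E i)) (hd : Pairwise (Disjoint on E)) :
    Summable fun i => |a (E i)| :=
  summable_of_sum_le (fun _ => abs_nonneg _) fun u => sum_abs_le_opNorm hS T ha u hE hd

end

theorem stmt_16 {X : Type*} [MeasurableSpace X] (μ : Measure X)
    (S : Submodule ℝ (Lp ℝ ∞ μ)) (hS : (S : Set (Lp ℝ ∞ μ)) = C0set μ)
    (T : S →L[ℝ] ℝ)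
    (a : Set X → ℝ)
    (ha : ∀ E : Set X, IsFiniteAtom μ E → ∀ g : S,
      (⇑(g : Lp ℝ ∞ μ) =ᵐ[μ] E.indicator (fun _ => (1 : ℝ))) → a E = T g) :
    (∀ 𝒜 : Set (Set X), (∀ E ∈ 𝒜, IsFiniteAtom μ E ∧ a E ≠ 0) →
      𝒜.Pairwise (Disjoint : Set X → Set X → Prop) → 𝒜.Countable) ∧
    (∀ E : ℕ → Set X, (∀ n, IsFiniteAtom μ (E n)) →
      Pairwise (Function.onFun Disjoint E) → Summable fun n => |a (E n)|) := by
  refine ⟨fun 𝒜 h𝒜 hd => ?_, fun E hE hd => summable_abs_of_pairwise_disjoint hS T ha hE hd⟩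
  have hsum : Summable fun E : 𝒜 => |a E| :=
    summable_abs_of_pairwise_disjoint hS T ha (fun E => (h𝒜 E E.2).1) hd.subtype
  have hsupp : Function.support (fun E : 𝒜 => |a E|) = Set.univ :=
    Set.eq_univ_of_forall fun E => abs_ne_zero.2 (h𝒜 E E.2).2
  exact Set.countable_univ_iff.1 (hsupp ▸ hsum.countable_support)
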